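/- arXiv:1711.09426 — 3 statements merged into one kernel-verified Lean document; each statement's English description precedes it below -/
import Mathlib

section
/- For every positive integer d and every ε ∈ (0,1) there is a function f(c) = f(c,d,ε) ∈ (0,1), defined for c > 0, satisfying lim_{c→0} f(c,d,ε) = 1, such that the following holds. Let H be a d-uniform hypergraph on a finite vertex set and let p ∈ (0, 1−ε). If H has branching factor c/p, then for every hyperedge e ∈ H, Pr_{S∼µ_p}[H|_S = {e}] ≥ f(c,d,ε)·p^d. -/
open Finset

namespace Stmt17Aux
set_option linter.unusedSectionVars false
variable {V : Type} [DecidableEq V]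

noncomputable def Ew (p : ℝ) (s : Finset V) (f : Finset V → ℝ) : ℝ :=
  ∑ S ∈ s.powerset, p ^ S.card * (1 - p) ^ (s.card - S.card) * f S


lemma Ew_congr {p : ℝ} {s : Finset V} {f g : Finset V → ℝ}
    (h : ∀ S ∈ s.powerset, f S = g S) : Ew p s f = Ew p s g :=
  Finset.sum_congr rfl fun S hS => by rw [h S hS]

lemma Ew_zero (p : ℝ) (s : Finset V) : Ew p s (fun _ => 0) = 0 := by
  simp [Ew]

lemma Ew_insert (p : ℝ) {a : V} {s : Finset V} (ha : a ∉ s) (f : Finset V → ℝ) :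
    Ew p (insert a s) f
      = (1 - p) * Ew p s f + p * Ew p s (fun S => f (insert a S)) := by
  unfold Ew
  rw [Finset.sum_powerset_insert ha, Finset.mul_sum, Finset.mul_sum]
  congr 1
  · refine Finset.sum_congr rfl fun S hS => ?_
    rw [Finset.mem_powerset] at hS
    rw [Finset.card_insert_of_notMem ha, Nat.succ_sub (Finset.card_le_card hS), pow_succ]
    ring
  · refine Finset.sum_congr rfl fun S hS => ?_
    rw [Finset.mem_powerset] at hS
    have haS : a ∉ S := fun h => ha (hS h)
    rw [Finset.card_insert_of_notMem ha, Finset.card_insert_of_notMem haS,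
      Nat.succ_sub_succ, pow_succ]
    ring

lemma Ew_const_one (p : ℝ) (s : Finset V) : Ew p s (fun _ => 1) = 1 := by
  induction s using Finset.induction with
  | empty => simp [Ew]
  | @insert a s ha ih => rw [Ew_insert p ha]; rw [ih]; ring

lemma Ew_mono {p : ℝ} (hp0 : 0 ≤ p) (hp1 : p ≤ 1) {s : Finset V} {f g : Finset V → ℝ}
    (h : ∀ S ∈ s.powerset, f S ≤ g S) : Ew p s f ≤ Ew p s g := by
  apply Finset.sum_le_sum
  intro S hS
  have h1 : (0:ℝ) ≤ 1 - p := by linarith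
  have : (0:ℝ) ≤ p ^ S.card * (1-p) ^ (s.card - S.card) := by positivity
  exact mul_le_mul_of_nonneg_left (h S hS) this

lemma Ew_nonneg {p : ℝ} (hp0 : 0 ≤ p) (hp1 : p ≤ 1) {s : Finset V} {f : Finset V → ℝ}
    (h : ∀ S ∈ s.powerset, 0 ≤ f S) : 0 ≤ Ew p s f := by
  rw [← Ew_zero p s]
  exact Ew_mono hp0 hp1 h

lemma Ew_ind (p : ℝ) {s : Finset V} : ∀ {T : Finset V}, T ⊆ s →
    Ew p s (fun S => if T ⊆ S then (1:ℝ) else 0) = p ^ T.card := by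
  induction s using Finset.induction with
  | empty =>
    intro T hT
    rw [Finset.subset_empty] at hT
    subst hT
    simp [Ew]
  | @insert a s ha ih =>
    intro T hT
    rw [Ew_insert p ha]
    by_cases haT : a ∈ T
    · have h1 : Ew p s (fun S => if T ⊆ S then (1:ℝ) else 0) = 0 := by
        have he : Ew p s (fun S => if T ⊆ S then (1:ℝ) else 0) = Ew p s (fun _ => 0) := by
          apply Ew_congr
          intro S hS
          rw [Finset.mem_powerset] at hS
          exact if_neg (fun hTS => ha (hS (hTS haT)))
        rw [he, Ew_zero]
      have hTe : T.erase a ⊆ s := by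
        intro v hv
        have := hT (Finset.mem_of_mem_erase hv)
        rcases Finset.mem_insert.mp this with h | h
        · exact absurd h (Finset.ne_of_mem_erase hv)
        · exact h
      have h2 : Ew p s (fun S => if T ⊆ insert a S then (1:ℝ) else 0)
          = p ^ (T.erase a).card := by
        simp only [Finset.subset_insert_iff]
        exact ih hTe
      rw [h1, h2, Finset.card_erase_of_mem haT, mul_zero, zero_add]
      rw [← pow_succ', Nat.sub_add_cancel (Finset.card_pos.mpr ⟨a, haT⟩)]
    · have hTs : T ⊆ s := by
        intro v hv
        rcases Finset.mem_insert.mp (hT hv) with h | h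
        · exact absurd (h ▸ hv) haT
        · exact h
      have h2 : Ew p s (fun S => if T ⊆ insert a S then (1:ℝ) else 0)
          = p ^ T.card := by
        simp only [Finset.subset_insert_iff, Finset.erase_eq_of_notMem haT]
        exact ih hTs
      rw [ih hTs, h2]; ring


lemma harris {p : ℝ} (hp0 : 0 ≤ p) (hp1 : p ≤ 1) (s : Finset V) :
    ∀ f g : Finset V → ℝ,
      (∀ A B : Finset V, A ⊆ B → B ⊆ s → f B ≤ f A) →
      (∀ A B : Finset V, A ⊆ B → B ⊆ s → g B ≤ g A) →
      Ew p s f * Ew p s g ≤ Ew p s (fun S => f S * g S) := by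
  induction s using Finset.induction with
  | empty =>
    intro f g _ _
    simp [Ew]
  | @insert a s ha ih =>
    intro f g hf hg
    have hss : s ⊆ insert a s := Finset.subset_insert a s
    have hf' : ∀ A B : Finset V, A ⊆ B → B ⊆ s → f B ≤ f A :=
      fun A B hAB hBs => hf A B hAB (hBs.trans hss)
    have hg' : ∀ A B : Finset V, A ⊆ B → B ⊆ s → g B ≤ g A :=
      fun A B hAB hBs => hg A B hAB (hBs.trans hss)
    have hf1 : ∀ A B : Finset V, A ⊆ B → B ⊆ s → f (insert a B) ≤ f (insert a A) :=
      fun A B hAB hBs => hf (insert a A) (insert a B)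
        (Finset.insert_subset_insert a hAB) (Finset.insert_subset_insert a hBs)
    have hg1 : ∀ A B : Finset V, A ⊆ B → B ⊆ s → g (insert a B) ≤ g (insert a A) :=
      fun A B hAB hBs => hg (insert a A) (insert a B)
        (Finset.insert_subset_insert a hAB) (Finset.insert_subset_insert a hBs)
    rw [Ew_insert p ha, Ew_insert p ha, Ew_insert p ha]
    set A := Ew p s f with hA
    set B := Ew p s (fun S => f (insert a S)) with hB
    set C := Ew p s g with hC
    set D := Ew p s (fun S => g (insert a S)) with hD
    have hBA : B ≤ A := by
      apply Ew_mono hp0 hp1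
      intro S hS
      rw [Finset.mem_powerset] at hS
      exact hf S (insert a S) (Finset.subset_insert a S)
        (Finset.insert_subset_insert a hS)
    have hDC : D ≤ C := by
      apply Ew_mono hp0 hp1
      intro S hS
      rw [Finset.mem_powerset] at hS
      exact hg S (insert a S) (Finset.subset_insert a S)
        (Finset.insert_subset_insert a hS)
    have h1 : A * C ≤ Ew p s (fun S => f S * g S) := ih f g hf' hg'
    have h2 : B * D ≤ Ew p s (fun S => f (insert a S) * g (insert a S)) :=
      ih (fun S => f (insert a S)) (fun S => g (insert a S)) hf1 hg1
    have key : ((1-p)*A + p*B) * ((1-p)*C + p*D) ≤ (1-p)*(A*C) + p*(B*D) := by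
      nlinarith [mul_nonneg (mul_nonneg hp0 (by linarith : (0:ℝ) ≤ 1 - p))
        (mul_nonneg (sub_nonneg.mpr hBA) (sub_nonneg.mpr hDC))]
    calc ((1-p)*A + p*B) * ((1-p)*C + p*D)
        ≤ (1-p)*(A*C) + p*(B*D) := key
      _ ≤ (1-p) * Ew p s (fun S => f S * g S)
            + p * Ew p s (fun S => f (insert a S) * g (insert a S)) := by
          have := mul_le_mul_of_nonneg_left h1 (by linarith : (0:ℝ) ≤ 1 - p)
          have := mul_le_mul_of_nonneg_left h2 hp0
          linarith

lemma Ew_one_sub_ind {p : ℝ} {s T : Finset V} (hT : T ⊆ s) :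
    Ew p s (fun S => if T ⊆ S then (0:ℝ) else 1) = 1 - p ^ T.card := by
  have h : Ew p s (fun S => if T ⊆ S then (0:ℝ) else 1)
      = Ew p s (fun _ => 1) - Ew p s (fun S => if T ⊆ S then (1:ℝ) else 0) := by
    unfold Ew
    rw [← Finset.sum_sub_distrib]
    apply Finset.sum_congr rfl
    intro S _
    by_cases hTS : T ⊆ S <;> simp [hTS] <;> ring
  rw [h, Ew_const_one, Ew_ind p hT]

lemma prod_bound {p : ℝ} (hp0 : 0 ≤ p) (hp1 : p ≤ 1) (s : Finset V)
    (I : Finset (Finset V)) (T : Finset V → Finset V)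
    (hT : ∀ i ∈ I, T i ⊆ s) :
    ∏ i ∈ I, (1 - p ^ (T i).card)
      ≤ Ew p s (fun S => ∏ i ∈ I, (if T i ⊆ S then (0:ℝ) else 1)) := by
  induction I using Finset.induction with
  | empty => simp [Ew_const_one]
  | @insert j I hj ih =>
    have hTj : T j ⊆ s := hT j (Finset.mem_insert_self j I)
    have hT' : ∀ i ∈ I, T i ⊆ s := fun i hi => hT i (Finset.mem_insert_of_mem hi)
    have hpow : p ^ (T j).card ≤ 1 := pow_le_one₀ hp0 hp1
    have hfac_nonneg : ∀ (i : Finset V) (S : Finset V),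
        (0:ℝ) ≤ (if T i ⊆ S then (0:ℝ) else 1) := by
      intro i S; split <;> norm_num
    have hg_anti : ∀ A B : Finset V, A ⊆ B → B ⊆ s →
        (if T j ⊆ B then (0:ℝ) else 1) ≤ (if T j ⊆ A then (0:ℝ) else 1) := by
      intro A B hAB _
      by_cases hA : T j ⊆ A
      · rw [if_pos hA, if_pos (hA.trans hAB)]
      · rw [if_neg hA]
        split <;> norm_num
    have hF_anti : ∀ A B : Finset V, A ⊆ B → B ⊆ s →
        (∏ i ∈ I, (if T i ⊆ B then (0:ℝ) else 1))
          ≤ ∏ i ∈ I, (if T i ⊆ A then (0:ℝ) else 1) := by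
      intro A B hAB _
      apply Finset.prod_le_prod
      · intro i _; exact hfac_nonneg i B
      · intro i _
        by_cases hA : T i ⊆ A
        · rw [if_pos hA, if_pos (hA.trans hAB)]
        · rw [if_neg hA]; split <;> norm_num
    have hEq : Ew p s (fun S => ∏ i ∈ insert j I, (if T i ⊆ S then (0:ℝ) else 1))
        = Ew p s (fun S => (if T j ⊆ S then (0:ℝ) else 1)
            * ∏ i ∈ I, (if T i ⊆ S then (0:ℝ) else 1)) := by
      apply Ew_congr
      intro S _
      rw [Finset.prod_insert hj]
    rw [hEq, Finset.prod_insert hj]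
    have hhar := harris hp0 hp1 s (fun S => if T j ⊆ S then (0:ℝ) else 1)
      (fun S => ∏ i ∈ I, (if T i ⊆ S then (0:ℝ) else 1)) hg_anti hF_anti
    have hEwg : Ew p s (fun S => if T j ⊆ S then (0:ℝ) else 1) = 1 - p ^ (T j).card :=
      Ew_one_sub_ind hTj
    have hprod_nonneg : (0:ℝ) ≤ ∏ i ∈ I, (1 - p ^ (T i).card) := by
      apply Finset.prod_nonneg
      intro i hi
      have : p ^ (T i).card ≤ 1 := pow_le_one₀ hp0 hp1
      linarith
    calc (1 - p ^ (T j).card) * ∏ i ∈ I, (1 - p ^ (T i).card)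
        ≤ (1 - p ^ (T j).card)
            * Ew p s (fun S => ∏ i ∈ I, (if T i ⊆ S then (0:ℝ) else 1)) := by
          apply mul_le_mul_of_nonneg_left (ih hT') (by linarith)
      _ = Ew p s (fun S => if T j ⊆ S then (0:ℝ) else 1)
            * Ew p s (fun S => ∏ i ∈ I, (if T i ⊆ S then (0:ℝ) else 1)) := by
          rw [hEwg]
      _ ≤ Ew p s (fun S => (if T j ⊆ S then (0:ℝ) else 1)
            * ∏ i ∈ I, (if T i ⊆ S then (0:ℝ) else 1)) := hhar

lemma key_ineq {ε x : ℝ} (hε0 : 0 < ε) (hx0 : 0 ≤ x) (hx1 : x ≤ 1 - ε) :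
    Real.exp (-(1/ε) * x) ≤ 1 - x := by
  have hL : (0:ℝ) < 1/ε := by positivity
  have h1 : 1 + (1/ε)*x ≤ Real.exp ((1/ε)*x) := by
    linarith [Real.add_one_le_exp ((1/ε)*x)]
  have h2 : (0:ℝ) < 1 + (1/ε)*x := by nlinarith
  have h3 : Real.exp (-(1/ε) * x) ≤ (1 + (1/ε)*x)⁻¹ := by
    rw [neg_mul, Real.exp_neg]
    exact inv_anti₀ h2 h1
  have hx2 : (0:ℝ) ≤ x * (1 - ε - x) := mul_nonneg hx0 (by linarith)
  have hgoal : 1 ≤ (1-x)*(1+(1/ε)*x) := by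
    have hd : (1-x)*(1+(1/ε)*x) - 1 = (x*(1-ε-x))/ε := by
      field_simp
      ring
    nlinarith [div_nonneg hx2 hε0.le]
  have h4 : (1 + (1/ε)*x)⁻¹ ≤ 1 - x := by
    rw [inv_eq_one_div, div_le_iff₀ h2]
    nlinarith
  exact h3.trans h4

end Stmt17Aux

open Stmt17Aux



/-- `H` has branching factor `ρ`: for every `A` and `r ≥ 0`, the number of
hyperedges `e ∈ H` with `e ⊇ A` and `|e| = |A| + r` is at most `ρ^r`. -/
def branching (V : Type) [DecidableEq V] (H : Finset (Finset V)) (ρ : ℝ) : Prop :=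
  ∀ (A : Finset V) (r : ℕ),
    ((H.filter (fun e => A ⊆ e ∧ e.card = A.card + r)).card : ℝ) ≤ ρ ^ r

/-- `Pr_{S ∼ µ_p}[H|_S = {e}]`, where `µ_p` puts each vertex of `V` in `S`
independently with probability `p`, and `H|_S = {e' ∈ H : e' ⊆ S}`. -/
def muOnly (V : Type) [Fintype V] [DecidableEq V] (p : ℝ)
    (H : Finset (Finset V)) (e : Finset V) : ℝ :=
  ∑ S : Finset V,
    if H.filter (fun e' => e' ⊆ S) = {e} then
      p ^ S.card * (1 - p) ^ (Fintype.card V - S.card)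
    else 0

set_option maxHeartbeats 1000000 in
/-- Unique-hit lemma: there is `f(c) = f(c,d,ε) ∈ (0,1)` with `f(c) → 1` as `c → 0⁺`
such that any `d`-uniform hypergraph with branching factor `c/p` satisfies
`Pr_{S∼µ_p}[H|_S = {e}] ≥ f(c)·p^d` for every hyperedge `e ∈ H`. -/
theorem stmt17 :
    ∀ (d : ℕ), 0 < d → ∀ ε : ℝ, ε ∈ Set.Ioo (0:ℝ) 1 →
      ∃ f : ℝ → ℝ,
        (∀ c : ℝ, 0 < c → f c ∈ Set.Ioo (0:ℝ) 1) ∧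
        Filter.Tendsto f (nhdsWithin 0 (Set.Ioi 0)) (nhds 1) ∧
        ∀ c : ℝ, 0 < c →
          ∀ (V : Type) [Fintype V] [DecidableEq V]
            (H : Finset (Finset V)), (∀ e ∈ H, e.card = d) →
            ∀ p : ℝ, p ∈ Set.Ioo (0:ℝ) (1 - ε) →
              branching V H (c / p) →
              ∀ e ∈ H, f c * p ^ d ≤ muOnly V p H e := by
  intro d hd ε hε
  obtain ⟨hε0, hε1⟩ := hε
  refine ⟨fun c => Real.exp (-(1/ε) * ((1+c)^d - 1)), ?_, ?_, ?_⟩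
  · intro c hc
    constructor
    · exact Real.exp_pos _
    · apply Real.exp_lt_one_iff.mpr
      have h1 : 1 < (1+c)^d := one_lt_pow₀ (by linarith) hd.ne'
      have h2 : (0:ℝ) < 1/ε := by positivity
      nlinarith
  · have hcont : Continuous fun c : ℝ => Real.exp (-(1/ε) * ((1+c)^d - 1)) := by
      continuity
    have h0 : Filter.Tendsto (fun c : ℝ => Real.exp (-(1/ε) * ((1+c)^d - 1)))
        (nhds 0) (nhds 1) := by
      have h1 := hcont.tendsto 0
      simp only [add_zero, one_pow, sub_self, mul_zero, Real.exp_zero] at h1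
      exact h1
    exact h0.mono_left nhdsWithin_le_nhds
  · intro c hc V _ _ H hunif p hp hbr e he
    obtain ⟨hp0, hpe⟩ := hp
    have hp1 : p < 1 := by linarith
    have hde : e.card = d := hunif e he
    set s : Finset V := Finset.univ \ e with hs
    -- counting
    have hcount : ∑ e' ∈ H.erase e, p ^ (e' \ e).card ≤ (1+c)^d - 1 := by
      have hmaps : ∀ e' ∈ H.erase e, e \ e' ∈ e.powerset.erase ∅ := by
        intro e' he'
        obtain ⟨hne, he'H⟩ := Finset.mem_erase.mp he'
        refine Finset.mem_erase.mpr ⟨?_, Finset.mem_powerset.mpr Finset.sdiff_subset⟩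
        intro h0
        have hsub : e ⊆ e' := by
          rwa [Finset.sdiff_eq_empty_iff_subset] at h0
        have hcards : e'.card ≤ e.card := by rw [hunif e' he'H, hde]
        exact hne (Finset.eq_of_subset_of_card_le hsub hcards).symm
      rw [← Finset.sum_fiberwise_of_maps_to hmaps]
      have inner : ∀ A ∈ e.powerset.erase ∅,
          ∑ e' ∈ (H.erase e).filter (fun e' => e \ e' = A), p ^ (e' \ e).card
            ≤ c ^ A.card := by
        intro A hA
        obtain ⟨hAne, hApow⟩ := Finset.mem_erase.mp hA
        have hAe : A ⊆ e := Finset.mem_powerset.mp hApow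
        have hAcard : A.card ≤ d := hde ▸ Finset.card_le_card hAe
        have hsum_eq : ∑ e' ∈ (H.erase e).filter (fun e' => e \ e' = A), p ^ (e' \ e).card
            = ((H.erase e).filter (fun e' => e \ e' = A)).card * p ^ A.card := by
          rw [Finset.sum_congr rfl (fun e' he' => ?_), Finset.sum_const, nsmul_eq_mul]
          obtain ⟨he'm, hfib⟩ := Finset.mem_filter.mp he'
          have he'H : e' ∈ H := Finset.mem_of_mem_erase he'm
          have hcc : e'.card = e.card := by rw [hunif e' he'H, hde]
          rw [Finset.card_sdiff_comm hcc, hfib]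
        rw [hsum_eq]
        have hsubset : (H.erase e).filter (fun e' => e \ e' = A)
            ⊆ H.filter (fun x => (e \ A) ⊆ x ∧ x.card = (e \ A).card + A.card) := by
          intro x hx
          obtain ⟨hxm, hfib⟩ := Finset.mem_filter.mp hx
          have hxH : x ∈ H := Finset.mem_of_mem_erase hxm
          refine Finset.mem_filter.mpr ⟨hxH, ?_, ?_⟩
          · rw [← hfib, Finset.sdiff_sdiff_self_left]
            exact Finset.inter_subset_right
          · rw [hunif x hxH, Finset.card_sdiff_of_subset hAe, hde, Nat.sub_add_cancel hAcard]
        have hcard_le : (((H.erase e).filter (fun e' => e \ e' = A)).card : ℝ)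
            ≤ (c/p) ^ A.card := by
          refine le_trans ?_ (hbr (e \ A) A.card)
          exact_mod_cast Finset.card_le_card hsubset
        have hple : (0:ℝ) ≤ p ^ A.card := by positivity
        calc (((H.erase e).filter (fun e' => e \ e' = A)).card : ℝ) * p ^ A.card
            ≤ (c/p) ^ A.card * p ^ A.card := mul_le_mul_of_nonneg_right hcard_le hple
          _ = c ^ A.card := by
              rw [← mul_pow, div_mul_cancel₀ c (ne_of_gt hp0)]
      refine le_trans (Finset.sum_le_sum inner) ?_
      have hprodsum : ∑ A ∈ e.powerset, c ^ A.card = (1+c)^d := by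
        calc ∑ A ∈ e.powerset, c ^ A.card
            = ∑ A ∈ e.powerset, (∏ _i ∈ A, c) * ∏ _i ∈ e \ A, (1:ℝ) := by
              apply Finset.sum_congr rfl
              intro A _
              rw [Finset.prod_const, Finset.prod_const, one_pow, mul_one]
          _ = ∏ _i ∈ e, (c + 1) := (Finset.prod_add _ _ e).symm
          _ = (1+c)^d := by rw [Finset.prod_const, hde]; ring_nf
      have := Finset.sum_erase_add e.powerset (fun A => c ^ A.card)
        (Finset.empty_mem_powerset e)
      simp only [Finset.card_empty, pow_zero] at this
      linarith [hprodsum ▸ this]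
    -- step 2 : product bound
    have hTsub : ∀ e' ∈ H.erase e, e' \ e ⊆ s := by
      intro e' _
      exact Finset.sdiff_subset_sdiff (Finset.subset_univ e') (Finset.Subset.refl e)
    have step2 : ∏ e' ∈ H.erase e, (1 - p ^ (e' \ e).card)
        ≤ Ew p s (fun S => ∏ e' ∈ H.erase e, (if e' \ e ⊆ S then (0:ℝ) else 1)) :=
      prod_bound hp0.le hp1.le s (H.erase e) (fun e' => e' \ e) hTsub
    -- step 3 : exp bound
    have step3 : Real.exp (-(1/ε) * ((1+c)^d - 1))
        ≤ ∏ e' ∈ H.erase e, (1 - p ^ (e' \ e).card) := by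
      have hmono : Real.exp (-(1/ε) * ((1+c)^d - 1))
          ≤ Real.exp (-(1/ε) * ∑ e' ∈ H.erase e, p ^ (e' \ e).card) := by
        apply Real.exp_le_exp.mpr
        have h2 : (0:ℝ) < 1/ε := by positivity
        nlinarith
      refine hmono.trans ?_
      have hexp_sum : Real.exp (-(1/ε) * ∑ e' ∈ H.erase e, p ^ (e' \ e).card)
          = ∏ e' ∈ H.erase e, Real.exp (-(1/ε) * p ^ (e' \ e).card) := by
        rw [Finset.mul_sum, Real.exp_sum]
      rw [hexp_sum]
      apply Finset.prod_le_prod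
      · intro i _; exact (Real.exp_pos _).le
      · intro e' he'
        obtain ⟨hne, he'H⟩ := Finset.mem_erase.mp he'
        have hk : 1 ≤ (e' \ e).card := by
          rw [Nat.one_le_iff_ne_zero]
          intro h0
          have : e' \ e = ∅ := Finset.card_eq_zero.mp h0
          have hsub : e' ⊆ e := by rwa [Finset.sdiff_eq_empty_iff_subset] at this
          have hcards : e.card ≤ e'.card := by rw [hunif e' he'H, hde]
          exact hne (Finset.eq_of_subset_of_card_le hsub hcards)
        have hx0 : (0:ℝ) ≤ p ^ (e' \ e).card := by positivity
        have hx1 : p ^ (e' \ e).card ≤ 1 - ε := by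
          calc p ^ (e' \ e).card ≤ p ^ 1 := pow_le_pow_of_le_one hp0.le hp1.le hk
            _ = p := pow_one p
            _ ≤ 1 - ε := hpe.le
        exact key_ineq hε0 hx0 hx1
    -- step 1 : muOnly lower bound
    have step1 : p ^ d * Ew p s (fun S => ∏ e' ∈ H.erase e,
        (if e' \ e ⊆ S then (0:ℝ) else 1)) ≤ muOnly V p H e := by
      have h1p : (0:ℝ) ≤ 1 - p := by linarith
      have hscard : s.card = Fintype.card V - d := by
        rw [hs, Finset.card_sdiff_of_subset (Finset.subset_univ e), Finset.card_univ, hde]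
      have perB : ∀ B ∈ s.powerset,
          p ^ d * (p ^ B.card * (1-p) ^ (s.card - B.card)
            * ∏ e' ∈ H.erase e, (if e' \ e ⊆ B then (0:ℝ) else 1))
          ≤ (if H.filter (fun e' => e' ⊆ (e ∪ B)) = {e} then
              p ^ (e ∪ B).card * (1-p) ^ (Fintype.card V - (e ∪ B).card) else 0) := by
        intro B hB
        rw [Finset.mem_powerset] at hB
        have hdisj : Disjoint e B := by
          rw [Finset.disjoint_right]
          intro v hvB
          exact (Finset.mem_sdiff.mp (hB hvB)).2
        have hcardU : (e ∪ B).card = d + B.card := by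
          rw [Finset.card_union_of_disjoint hdisj, hde]
        have hexp : Fintype.card V - (e ∪ B).card = s.card - B.card := by
          rw [hcardU, hscard, Nat.sub_sub]
        by_cases hcond : H.filter (fun e' => e' ⊆ (e ∪ B)) = {e}
        · rw [if_pos hcond, hexp, hcardU, pow_add]
          have hF1 : (∏ e' ∈ H.erase e, (if e' \ e ⊆ B then (0:ℝ) else 1)) ≤ 1 := by
            apply Finset.prod_le_one
            · intro i _; split <;> norm_num
            · intro i _; split <;> norm_num
          have hw : (0:ℝ) ≤ p ^ d * (p ^ B.card * (1-p) ^ (s.card - B.card)) := by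
            positivity
          calc p ^ d * (p ^ B.card * (1-p) ^ (s.card - B.card)
                * ∏ e' ∈ H.erase e, (if e' \ e ⊆ B then (0:ℝ) else 1))
              = (p ^ d * (p ^ B.card * (1-p) ^ (s.card - B.card)))
                * ∏ e' ∈ H.erase e, (if e' \ e ⊆ B then (0:ℝ) else 1) := by ring
            _ ≤ (p ^ d * (p ^ B.card * (1-p) ^ (s.card - B.card))) * 1 := by
                apply mul_le_mul_of_nonneg_left hF1 hw
            _ = p ^ d * p ^ B.card * (1-p) ^ (s.card - B.card) := by ring
        · rw [if_neg hcond]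
          have heF : e ∈ H.filter (fun e' => e' ⊆ (e ∪ B)) :=
            Finset.mem_filter.mpr ⟨he, Finset.subset_union_left⟩
          have hex : ∃ e' ∈ H.filter (fun e' => e' ⊆ (e ∪ B)), e' ≠ e := by
            by_contra hall
            push_neg at hall
            exact hcond (Finset.eq_singleton_iff_unique_mem.mpr ⟨heF, hall⟩)
          obtain ⟨e', he'F, hne⟩ := hex
          obtain ⟨he'H, he'sub⟩ := Finset.mem_filter.mp he'F
          have hsubB : e' \ e ⊆ B := by
            intro v hv
            obtain ⟨hve', hvne⟩ := Finset.mem_sdiff.mp hv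
            rcases Finset.mem_union.mp (he'sub hve') with h | h
            · exact absurd h hvne
            · exact h
          have hF0 : (∏ e' ∈ H.erase e, (if e' \ e ⊆ B then (0:ℝ) else 1)) = 0 := by
            apply Finset.prod_eq_zero (Finset.mem_erase.mpr ⟨hne, he'H⟩)
            rw [if_pos hsubB]
          rw [hF0, mul_zero, mul_zero]
      have hinj : ∀ B1 ∈ s.powerset, ∀ B2 ∈ s.powerset,
          e ∪ B1 = e ∪ B2 → B1 = B2 := by
        intro B1 h1 B2 h2 hEq
        rw [Finset.mem_powerset] at h1 h2
        have d1 : Disjoint e B1 := by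
          rw [Finset.disjoint_right]; intro v hv; exact (Finset.mem_sdiff.mp (h1 hv)).2
        have d2 : Disjoint e B2 := by
          rw [Finset.disjoint_right]; intro v hv; exact (Finset.mem_sdiff.mp (h2 hv)).2
        have := congrArg (fun X => X \ e) hEq
        simpa [Finset.union_sdiff_cancel_left d1, Finset.union_sdiff_cancel_left d2]
          using this
      calc p ^ d * Ew p s (fun S => ∏ e' ∈ H.erase e,
              (if e' \ e ⊆ S then (0:ℝ) else 1))
          = ∑ B ∈ s.powerset, p ^ d * (p ^ B.card * (1-p) ^ (s.card - B.card)
              * ∏ e' ∈ H.erase e, (if e' \ e ⊆ B then (0:ℝ) else 1)) := by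
            unfold Stmt17Aux.Ew
            rw [Finset.mul_sum]
        _ ≤ ∑ B ∈ s.powerset, (if H.filter (fun e' => e' ⊆ (e ∪ B)) = {e} then
              p ^ (e ∪ B).card * (1-p) ^ (Fintype.card V - (e ∪ B).card) else 0) :=
            Finset.sum_le_sum perB
        _ = ∑ S ∈ s.powerset.image (fun B => e ∪ B),
              (if H.filter (fun e' => e' ⊆ S) = {e} then
                p ^ S.card * (1-p) ^ (Fintype.card V - S.card) else 0) :=
            (Finset.sum_image (f := fun S => if H.filter (fun e' => e' ⊆ S) = {e} then
              p ^ S.card * (1-p) ^ (Fintype.card V - S.card) else 0)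
              (g := fun B => e ∪ B) hinj).symm
        _ ≤ ∑ S : Finset V, (if H.filter (fun e' => e' ⊆ S) = {e} then
              p ^ S.card * (1-p) ^ (Fintype.card V - S.card) else 0) := by
            apply Finset.sum_le_sum_of_subset_of_nonneg (Finset.subset_univ _)
            intro S _ _
            split
            · positivity
            · exact le_refl _
        _ = muOnly V p H e := rfl
    -- combine
    have hEw_nn : (0:ℝ) ≤ Ew p s (fun S => ∏ e' ∈ H.erase e,
        (if e' \ e ⊆ S then (0:ℝ) else 1)) := by
      apply Ew_nonneg hp0.le hp1.le
      intro S _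
      apply Finset.prod_nonneg
      intro i _
      split <;> norm_num
    have hpd : (0:ℝ) ≤ p ^ d := by positivity
    calc Real.exp (-(1/ε) * ((1+c)^d - 1)) * p ^ d
        = p ^ d * Real.exp (-(1/ε) * ((1+c)^d - 1)) := mul_comm _ _
      _ ≤ p ^ d * ∏ e' ∈ H.erase e, (1 - p ^ (e' \ e).card) :=
          mul_le_mul_of_nonneg_left step3 hpd
      _ ≤ p ^ d * Ew p s (fun S => ∏ e' ∈ H.erase e,
            (if e' \ e ⊆ S then (0:ℝ) else 1)) :=
          mul_le_mul_of_nonneg_left step2 hpd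
      _ ≤ muOnly V p H e := step1
end

section
/- Fix ε > 0 and an integer d ≥ 0. There exist p₀ > 0 and a constant c′ > 0 (both depending only on d and ε) such that for every p ∈ (0,p₀) and every d-uniform hypergraph H on a finite vertex set, there exists a subhypergraph H′ ⊆ H (obtained by removing hyperedges) such that: (1) hit_p(H′) ≥ c′·hit_p(H); and (2) for every hyperedge e ∈ H′, Pr_{S∼µ_p}[H′|_S = {e}] ≥ (1−ε)·p^d. -/
set_option linter.unusedSectionVars false
set_option linter.unusedVariables false


open Finset

/-- `hitp V p H = Pr_{S ∼ µ_p}[H|_S ≠ ∅]`, where `µ_p` puts each vertex of `V`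
in `S` independently with probability `p`, and `H|_S = {e ∈ H : e ⊆ S}`. -/
def hitp (V : Type) [Fintype V] [DecidableEq V] (p : ℝ) (H : Finset (Finset V)) : ℝ :=
  ∑ S : Finset V,
    if (H.filter (fun e => e ⊆ S)).Nonempty then
      p ^ S.card * (1 - p) ^ (Fintype.card V - S.card)
    else 0

namespace Stmt18Aux

open scoped Classical

variable {V : Type} [Fintype V] [DecidableEq V]

noncomputable def wt (p : ℝ) (S : Finset V) : ℝ :=
  p ^ S.card * (1 - p) ^ (Fintype.card V - S.card)

lemma wt_nonneg {p : ℝ} (h0 : 0 ≤ p) (h1 : p ≤ 1) (S : Finset V) : 0 ≤ wt p S :=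
  mul_nonneg (pow_nonneg h0 _) (pow_nonneg (by linarith) _)

noncomputable def prW (p : ℝ) (A : Finset V → Prop) : ℝ :=
  ∑ S : Finset V, if A S then wt p S else 0

lemma ite_wt_nonneg {p : ℝ} (h0 : 0 ≤ p) (h1 : p ≤ 1) (Q : Prop) [Decidable Q] (S : Finset V) :
    0 ≤ if Q then wt p S else 0 := by
  split_ifs
  · exact wt_nonneg h0 h1 S
  · exact le_refl 0

lemma prW_nonneg {p : ℝ} (h0 : 0 ≤ p) (h1 : p ≤ 1) (A : Finset V → Prop) :
    0 ≤ prW p A :=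
  Finset.sum_nonneg fun S _ => ite_wt_nonneg h0 h1 _ S

lemma prW_mono {p : ℝ} (h0 : 0 ≤ p) (h1 : p ≤ 1) {A B : Finset V → Prop}
    (h : ∀ S, A S → B S) : prW p A ≤ prW p B := by
  refine Finset.sum_le_sum fun S _ => ?_
  by_cases hA : A S
  · rw [if_pos hA, if_pos (h S hA)]
  · rw [if_neg hA]; exact ite_wt_nonneg h0 h1 _ S

lemma prW_le_add {p : ℝ} (h0 : 0 ≤ p) (h1 : p ≤ 1) {A B C : Finset V → Prop}
    (h : ∀ S, A S → B S ∨ C S) : prW p A ≤ prW p B + prW p C := by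
  unfold prW
  rw [← Finset.sum_add_distrib]
  refine Finset.sum_le_sum fun S _ => ?_
  by_cases hA : A S
  · rw [if_pos hA]
    rcases h S hA with hB | hC
    · rw [if_pos hB]
      have := ite_wt_nonneg (p := p) h0 h1 (C S) S
      linarith
    · rw [if_pos hC]
      have := ite_wt_nonneg (p := p) h0 h1 (B S) S
      linarith
  · rw [if_neg hA]
    have := ite_wt_nonneg (p := p) h0 h1 (B S) S
    have := ite_wt_nonneg (p := p) h0 h1 (C S) S
    linarith

lemma prW_union_le {p : ℝ} (h0 : 0 ≤ p) (h1 : p ≤ 1) {α : Type*} (s : Finset α)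
    (A : α → Finset V → Prop) :
    prW p (fun S => ∃ x ∈ s, A x S) ≤ ∑ x ∈ s, prW p (A x) := by
  unfold prW
  rw [Finset.sum_comm]
  refine Finset.sum_le_sum fun S _ => ?_
  by_cases hA : ∃ x ∈ s, A x S
  · rw [if_pos hA]
    obtain ⟨x, hx, hAx⟩ := hA
    refine le_trans (le_of_eq (if_pos hAx).symm)
      (Finset.single_le_sum (f := fun y => if A y S then wt p S else 0)
        (fun y _ => ite_wt_nonneg h0 h1 (A y S) S) hx)
  · rw [if_neg hA]
    exact Finset.sum_nonneg fun y _ => ite_wt_nonneg h0 h1 (A y S) S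

lemma sum_pow_powerset (p : ℝ) (A : Finset V) :
    ∑ T ∈ A.powerset, p ^ T.card * (1 - p) ^ (A.card - T.card) = 1 := by
  have hone : p + (1 - p) = 1 := by ring
  calc ∑ T ∈ A.powerset, p ^ T.card * (1 - p) ^ (A.card - T.card)
      = ∑ T ∈ A.powerset, (∏ _i ∈ T, p) * ∏ _i ∈ A \ T, (1 - p) := by
        refine Finset.sum_congr rfl fun T hT => ?_
        rw [Finset.prod_const, Finset.prod_const, Finset.card_sdiff_of_subset (Finset.mem_powerset.1 hT)]
    _ = ∏ _i ∈ A, (p + (1 - p)) := (Finset.prod_add _ _ _).symm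
    _ = 1 := by simp [hone]

lemma prW_subset (p : ℝ) (t : Finset V) : prW p (fun S : Finset V => t ⊆ S) = p ^ t.card := by
  have h1 : prW p (fun S : Finset V => t ⊆ S) = ∑ S ∈ Finset.univ.filter (fun S : Finset V => t ⊆ S), wt p S := by
    unfold prW
    rw [Finset.sum_filter]
    exact Finset.sum_congr rfl fun S _ => by split_ifs <;> rfl
  rw [h1]
  have key : ∑ S ∈ Finset.univ.filter (fun S : Finset V => t ⊆ S), wt p S
      = ∑ T ∈ (Finset.univ \ t).powerset, wt p (T ∪ t) := by
    refine Finset.sum_nbij' (fun S => S \ t) (fun T => T ∪ t) ?_ ?_ ?_ ?_ ?_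
    · intro S hS
      exact Finset.mem_powerset.2 (Finset.sdiff_subset_sdiff (Finset.subset_univ S) le_rfl)
    · intro T hT
      refine Finset.mem_filter.2 ⟨Finset.mem_univ _, Finset.subset_union_right⟩
    · intro S hS
      exact Finset.sdiff_union_of_subset (Finset.mem_filter.1 hS).2
    · intro T hT
      have := (Finset.subset_sdiff.1 (Finset.mem_powerset.1 hT)).2
      exact Finset.union_sdiff_cancel_right this
    · intro S hS
      rw [Finset.sdiff_union_of_subset (Finset.mem_filter.1 hS).2]
  rw [key]
  have hcard : (Finset.univ \ t : Finset V).card = Fintype.card V - t.card := by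
    rw [Finset.card_sdiff_of_subset (Finset.subset_univ t), Finset.card_univ]
  have : ∀ T ∈ (Finset.univ \ t : Finset V).powerset,
      wt p (T ∪ t) = p ^ t.card * (p ^ T.card * (1 - p) ^ ((Finset.univ \ t : Finset V).card - T.card)) := by
    intro T hT
    have hdisj : Disjoint T t := (Finset.subset_sdiff.1 (Finset.mem_powerset.1 hT)).2
    have hsub : T ⊆ Finset.univ \ t := Finset.mem_powerset.1 hT
    have hcu : (T ∪ t).card = T.card + t.card := Finset.card_union_of_disjoint hdisj
    have hTle : T.card ≤ Fintype.card V - t.card := by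
      rw [← hcard]; exact Finset.card_le_card hsub
    have htle : t.card ≤ Fintype.card V := Finset.card_le_univ t
    unfold wt
    rw [hcu, hcard]
    rw [pow_add]
    have hexp : Fintype.card V - (T.card + t.card) = Fintype.card V - t.card - T.card := by omega
    rw [hexp]
    ring
  rw [Finset.sum_congr rfl this, ← Finset.mul_sum, sum_pow_powerset, mul_one]

lemma hitp_eq_prW (p : ℝ) (H : Finset (Finset V)) :
    hitp V p H = prW p (fun S => (H.filter (fun e => e ⊆ S)).Nonempty) := by
  unfold hitp prW wt
  exact Finset.sum_congr rfl fun S _ => by split_ifs <;> rfl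

lemma muOnly_eq_prW (p : ℝ) (H : Finset (Finset V)) (e : Finset V) :
    muOnly V p H e = prW p (fun S => H.filter (fun e' => e' ⊆ S) = {e}) := by
  unfold muOnly prW wt
  exact Finset.sum_congr rfl fun S _ => by split_ifs <;> rfl

lemma hitp_empty (p : ℝ) : hitp V p (∅ : Finset (Finset V)) = 0 := by
  unfold hitp
  refine Finset.sum_eq_zero fun S _ => ?_
  rw [Finset.filter_empty, if_neg (by simp)]

lemma hitp_nonneg {p : ℝ} (h0 : 0 ≤ p) (h1 : p ≤ 1) (H : Finset (Finset V)) :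
    0 ≤ hitp V p H := by
  rw [hitp_eq_prW]; exact prW_nonneg h0 h1 _

lemma hitp_erase_add (p : ℝ) (H : Finset (Finset V)) (e : Finset V) (he : e ∈ H) :
    hitp V p H = hitp V p (H.erase e) + muOnly V p H e := by
  unfold hitp muOnly
  rw [← Finset.sum_add_distrib]
  refine Finset.sum_congr rfl fun S _ => ?_
  have hfe : (H.erase e).filter (fun e' => e' ⊆ S) = (H.filter (fun e' => e' ⊆ S)).erase e :=
    Finset.filter_erase (p := fun e' => e' ⊆ S) e H
  by_cases h1 : H.filter (fun e' => e' ⊆ S) = {e}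
  · rw [if_pos h1]
    have h2 : ¬ ((H.erase e).filter (fun e' => e' ⊆ S)).Nonempty := by
      rw [hfe, h1, Finset.erase_singleton]
      exact Finset.not_nonempty_empty
    rw [if_neg h2, if_pos (h1 ▸ Finset.singleton_nonempty e)]
    ring
  · rw [if_neg h1]
    have h2 : ((H.erase e).filter (fun e' => e' ⊆ S)).Nonempty ↔
        (H.filter (fun e' => e' ⊆ S)).Nonempty := by
      rw [hfe]
      constructor
      · rintro ⟨x, hx⟩
        exact ⟨x, Finset.mem_of_mem_erase hx⟩
      · intro hne
        rw [Finset.nonempty_iff_ne_empty]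
        intro hemp
        rcases (Finset.erase_eq_empty_iff _ _).1 hemp with h | h
        · rw [h] at hne; exact Finset.not_nonempty_empty hne
        · exact h1 h
    by_cases h3 : (H.filter (fun e' => e' ⊆ S)).Nonempty
    · rw [if_pos h3, if_pos (h2.2 h3)]; ring
    · rw [if_neg h3, if_neg (fun hh => h3 (h2.1 hh))]; ring

end Stmt18Aux

open Stmt18Aux

/-- Pruning corollary: every `d`-uniform hypergraph `H` has a subhypergraph `H'`
with `hit_p(H') ≥ c'·hit_p(H)` such that every hyperedge of `H'` is, with
probability at least `(1-ε)p^d`, the unique induced hyperedge. -/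
theorem stmt18 :
    ∀ ε : ℝ, 0 < ε → ∀ d : ℕ,
      ∃ p₀ : ℝ, 0 < p₀ ∧ ∃ c' : ℝ, 0 < c' ∧
        ∀ p : ℝ, p ∈ Set.Ioo (0:ℝ) p₀ →
          ∀ (V : Type) [Fintype V] [DecidableEq V]
            (H : Finset (Finset V)), (∀ e ∈ H, e.card = d) →
            ∃ H' ⊆ H,
              c' * hitp V p H ≤ hitp V p H' ∧
              ∀ e ∈ H', (1 - ε) * p ^ d ≤ muOnly V p H' e := by
  intro ε hε d
  have hεt0 : 0 < min ε (1/2) := lt_min hε (by norm_num)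
  set εt := min ε (1/2) with hεtdef
  have hεt2 : εt ≤ 1/2 := min_le_right _ _
  have hεtε : εt ≤ ε := min_le_left _ _
  set γ : ℝ := εt / 2 ^ (d + 1) with hγdef
  have hγ0 : 0 < γ := by positivity
  set K : ℝ := 2 ^ d / γ with hKdef
  have hK0 : 0 < K := by positivity
  refine ⟨1, one_pos, εt / (2 * (1 + 2 * K)), by positivity, ?_⟩
  intro p hp V _inst1 _inst2 H hunif
  classical
  obtain ⟨hp0, hp1⟩ := hp
  have h0 : (0:ℝ) ≤ p := le_of_lt hp0
  have h1 : p ≤ 1 := le_of_lt hp1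
  have hpd : (0:ℝ) < p ^ d := pow_pos hp0 d
  -- the maximal "locally good" family F
  have hPne : ((H.powerset.filter
      (fun F => (1 - εt / 2) * p ^ d * (F.card : ℝ) ≤ hitp V p F))).Nonempty := by
    refine ⟨∅, Finset.mem_filter.2 ⟨Finset.empty_mem_powerset H, ?_⟩⟩
    rw [hitp_empty]
    simp
  obtain ⟨F, hFmem, hFmax⟩ := Finset.exists_max_image _ (fun F => F.card) hPne
  have hFH : F ⊆ H := Finset.mem_powerset.1 (Finset.mem_filter.1 hFmem).1
  have hFP : (1 - εt / 2) * p ^ d * (F.card : ℝ) ≤ hitp V p F := (Finset.mem_filter.1 hFmem).2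
  -- rejected edges see F strongly
  have hrej : ∀ e ∈ H, e ∉ F → εt / 2 * p ^ d <
      prW p (fun S => e ⊆ S ∧ (F.filter (fun f => f ⊆ S)).Nonempty) := by
    intro e heH heF
    have hinsmem : insert e F ⊆ H := Finset.insert_subset heH hFH
    have hfail : ¬ ((1 - εt / 2) * p ^ d * (((insert e F).card : ℕ) : ℝ) ≤
        hitp V p (insert e F)) := by
      intro hgood
      have hcardle := hFmax (insert e F)
        (Finset.mem_filter.2 ⟨Finset.mem_powerset.2 hinsmem, hgood⟩)
      rw [Finset.card_insert_of_notMem heF] at hcardle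
      omega
    push_neg at hfail
    rw [Finset.card_insert_of_notMem heF] at hfail
    push_cast at hfail
    have hins : hitp V p (insert e F) = hitp V p F + muOnly V p (insert e F) e := by
      have h := hitp_erase_add p (insert e F) e (Finset.mem_insert_self e F)
      rwa [Finset.erase_insert heF] at h
    have hexp : (1 - εt / 2) * p ^ d * ((F.card : ℝ) + 1)
        = (1 - εt / 2) * p ^ d * (F.card : ℝ) + (1 - εt / 2) * p ^ d := by ring
    have hmulow : muOnly V p (insert e F) e < (1 - εt / 2) * p ^ d := by
      rw [hexp] at hfail
      linarith
    have hsplit2 : prW (V := V) p (fun S => e ⊆ S) ≤ muOnly V p (insert e F) e +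
        prW p (fun S => e ⊆ S ∧ (F.filter (fun f => f ⊆ S)).Nonempty) := by
      rw [muOnly_eq_prW]
      refine prW_le_add h0 h1 ?_
      intro S hS
      by_cases hne : (F.filter (fun f => f ⊆ S)).Nonempty
      · exact Or.inr ⟨hS, hne⟩
      · left
        rw [Finset.filter_insert, if_pos hS, Finset.not_nonempty_iff_eq_empty.1 hne]
        rfl
    rw [prW_subset p e, hunif e heH] at hsplit2
    linarith
  -- hence a weighted neighbour sum is large
  have hsumF : ∀ e ∈ H, e ∉ F → εt / 2 < ∑ f ∈ F, p ^ (f \ e).card := by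
    intro e heH heF
    have hJ := hrej e heH heF
    have hJle : prW p (fun S => e ⊆ S ∧ (F.filter (fun f => f ⊆ S)).Nonempty)
        ≤ ∑ f ∈ F, p ^ d * p ^ (f \ e).card := by
      have step1 : prW p (fun S => e ⊆ S ∧ (F.filter (fun f => f ⊆ S)).Nonempty)
          ≤ prW p (fun S => ∃ f ∈ F, e ∪ f ⊆ S) := by
        refine prW_mono h0 h1 ?_
        rintro S ⟨hS, g, hg⟩
        exact ⟨g, (Finset.mem_filter.1 hg).1,
          Finset.union_subset hS (Finset.mem_filter.1 hg).2⟩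
      refine le_trans step1 (le_trans (prW_union_le h0 h1 F _) ?_)
      refine Finset.sum_le_sum fun f _hf => ?_
      rw [prW_subset]
      have hc1 : (f \ e).card + e.card = (f ∪ e).card := Finset.card_sdiff_add_card f e
      have hc2 : (e ∪ f) = (f ∪ e) := Finset.union_comm e f
      have hcard : (e ∪ f).card = d + (f \ e).card := by
        rw [hc2, ← hc1, hunif e heH]; omega
      rw [hcard, pow_add]
    have h2 : p ^ d * (εt / 2) < p ^ d * ∑ f ∈ F, p ^ (f \ e).card := by
      rw [← Finset.mul_sum] at hJle
      calc p ^ d * (εt / 2) = εt / 2 * p ^ d := by ring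
        _ < _ := lt_of_lt_of_le hJ hJle
    exact (mul_lt_mul_iff_right₀ hpd).1 h2
  -- pigeonhole: each rejected edge has a popular core
  have hpig : ∀ e ∈ H, e ∉ F → ∃ t, t ⊆ e ∧
      γ < ((F.filter (fun f => t ⊆ f)).card : ℝ) * p ^ (d - t.card) := by
    intro e heH heF
    have hfib : ∑ t ∈ e.powerset, ∑ f ∈ F.filter (fun f => f ∩ e = t), p ^ (f \ e).card
        = ∑ f ∈ F, p ^ (f \ e).card :=
      Finset.sum_fiberwise_of_maps_to
        (fun f _ => Finset.mem_powerset.2 Finset.inter_subset_right) _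
    have hcardpow : ((e.powerset.card : ℕ) : ℝ) * γ = εt / 2 := by
      rw [Finset.card_powerset, hunif e heH, hγdef]
      push_cast
      field_simp
      ring
    have hsum : ∑ _t ∈ e.powerset, γ
        < ∑ t ∈ e.powerset, ∑ f ∈ F.filter (fun f => f ∩ e = t), p ^ (f \ e).card := by
      rw [Finset.sum_const, nsmul_eq_mul, hcardpow, hfib]
      exact hsumF e heH heF
    obtain ⟨t, htmem, hlt⟩ := Finset.exists_lt_of_sum_lt hsum
    refine ⟨t, Finset.mem_powerset.1 htmem, ?_⟩
    have hinner : ∀ f ∈ F.filter (fun f => f ∩ e = t), p ^ (f \ e).card = p ^ (d - t.card) := by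
      intro f hf
      obtain ⟨hfF, hfe⟩ := Finset.mem_filter.1 hf
      have hc1 : (f ∩ e).card + (f \ e).card = f.card := Finset.card_inter_add_card_sdiff f e
      have hc2 : f.card = d := hunif f (hFH hfF)
      have hc3 : (f \ e).card = d - t.card := by rw [hfe] at hc1; omega
      rw [hc3]
    rw [Finset.sum_congr rfl hinner, Finset.sum_const, nsmul_eq_mul] at hlt
    have hsub : F.filter (fun f => f ∩ e = t) ⊆ F.filter (fun f => t ⊆ f) := by
      intro f hf
      obtain ⟨hfF, hfe⟩ := Finset.mem_filter.1 hf
      exact Finset.mem_filter.2 ⟨hfF, by rw [← hfe]; exact Finset.inter_subset_left⟩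
    have hle : ((F.filter (fun f => f ∩ e = t)).card : ℝ)
        ≤ ((F.filter (fun f => t ⊆ f)).card : ℝ) := by
      exact_mod_cast Finset.card_le_card hsub
    exact lt_of_lt_of_le hlt (mul_le_mul_of_nonneg_right hle (pow_nonneg h0 _))
  choose! tf htf1 htf2 using hpig
  -- split the hitting probability
  have hsplitH : hitp V p H ≤ hitp V p F +
      prW p (fun S => ∃ t ∈ (H \ F).image tf, t ⊆ S) := by
    rw [hitp_eq_prW p H, hitp_eq_prW p F]
    refine prW_le_add h0 h1 ?_
    rintro S ⟨x, hx⟩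
    obtain ⟨hxH, hxS⟩ := Finset.mem_filter.1 hx
    by_cases hxF : x ∈ F
    · exact Or.inl ⟨x, Finset.mem_filter.2 ⟨hxF, hxS⟩⟩
    · exact Or.inr ⟨tf x, Finset.mem_image_of_mem tf (Finset.mem_sdiff.2 ⟨hxH, hxF⟩),
        (htf1 x hxH hxF).trans hxS⟩
  have hTbound : prW p (fun S => ∃ t ∈ (H \ F).image tf, t ⊆ S)
      ≤ ∑ t ∈ (H \ F).image tf, p ^ t.card := by
    refine le_trans (prW_union_le h0 h1 _ _) ?_
    exact le_of_eq (Finset.sum_congr rfl fun t _ => prW_subset p t)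
  have htb : ∀ t ∈ (H \ F).image tf,
      p ^ t.card ≤ γ⁻¹ * p ^ d * ((F.filter (fun f => t ⊆ f)).card : ℝ) := by
    intro t ht
    obtain ⟨e, heHF, rfl⟩ := Finset.mem_image.1 ht
    obtain ⟨heH, heF⟩ := Finset.mem_sdiff.1 heHF
    have ht1 := htf1 e heH heF
    have ht2 := htf2 e heH heF
    have htd : (tf e).card ≤ d := by
      rw [← hunif e heH]; exact Finset.card_le_card ht1
    have hpow : p ^ (tf e).card * p ^ (d - (tf e).card) = p ^ d := by
      rw [← pow_add]; congr 1; omega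
    have hstep : p ^ (tf e).card * γ ≤ p ^ (tf e).card *
        (((F.filter (fun f => tf e ⊆ f)).card : ℝ) * p ^ (d - (tf e).card)) :=
      mul_le_mul_of_nonneg_left (le_of_lt ht2) (pow_nonneg h0 _)
    have heq : p ^ (tf e).card *
        (((F.filter (fun f => tf e ⊆ f)).card : ℝ) * p ^ (d - (tf e).card))
        = ((F.filter (fun f => tf e ⊆ f)).card : ℝ) * p ^ d := by
      rw [← hpow]; ring
    rw [heq] at hstep
    have hdiv : p ^ (tf e).card ≤ ((F.filter (fun f => tf e ⊆ f)).card : ℝ) * p ^ d / γ :=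
      (le_div_iff₀ hγ0).2 hstep
    calc p ^ (tf e).card ≤ ((F.filter (fun f => tf e ⊆ f)).card : ℝ) * p ^ d / γ := hdiv
      _ = γ⁻¹ * p ^ d * ((F.filter (fun f => tf e ⊆ f)).card : ℝ) := by ring
  have hcount : ∑ t ∈ (H \ F).image tf, ((F.filter (fun f => t ⊆ f)).card : ℝ)
      ≤ (2:ℝ) ^ d * (F.card : ℝ) := by
    have hnat : ∑ t ∈ (H \ F).image tf, (F.filter (fun f => t ⊆ f)).card
        ≤ 2 ^ d * F.card := by
      have hswap : ∑ t ∈ (H \ F).image tf, (F.filter (fun f => t ⊆ f)).card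
          = ∑ f ∈ F, (((H \ F).image tf).filter (fun t => t ⊆ f)).card := by
        simp_rw [Finset.card_filter]
        exact Finset.sum_comm
      rw [hswap]
      have hbnd : ∀ f ∈ F, (((H \ F).image tf).filter (fun t => t ⊆ f)).card ≤ 2 ^ d := by
        intro f hf
        have hss : (((H \ F).image tf).filter (fun t => t ⊆ f)) ⊆ f.powerset :=
          fun t htmem => Finset.mem_powerset.2 (Finset.mem_filter.1 htmem).2
        calc (((H \ F).image tf).filter (fun t => t ⊆ f)).card
            ≤ f.powerset.card := Finset.card_le_card hss
          _ = 2 ^ d := by rw [Finset.card_powerset, hunif f (hFH hf)]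
      calc ∑ f ∈ F, (((H \ F).image tf).filter (fun t => t ⊆ f)).card
          ≤ ∑ _f ∈ F, 2 ^ d := Finset.sum_le_sum hbnd
        _ = 2 ^ d * F.card := by rw [Finset.sum_const, smul_eq_mul, mul_comm]
    exact_mod_cast hnat
  -- global comparison
  have hA0 : (0:ℝ) ≤ p ^ d * (F.card : ℝ) := by positivity
  have hH3 : hitp V p H ≤ hitp V p F + K * (p ^ d * (F.card : ℝ)) := by
    have h2 : ∑ t ∈ (H \ F).image tf, p ^ t.card
        ≤ γ⁻¹ * p ^ d * ((2:ℝ) ^ d * (F.card : ℝ)) := by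
      refine le_trans (Finset.sum_le_sum htb) ?_
      calc ∑ t ∈ (H \ F).image tf, γ⁻¹ * p ^ d * ((F.filter (fun f => t ⊆ f)).card : ℝ)
          = γ⁻¹ * p ^ d * ∑ t ∈ (H \ F).image tf, ((F.filter (fun f => t ⊆ f)).card : ℝ) := by
            rw [Finset.mul_sum]
        _ ≤ γ⁻¹ * p ^ d * ((2:ℝ) ^ d * (F.card : ℝ)) := by
            refine mul_le_mul_of_nonneg_left hcount ?_
            positivity
    have heqK : γ⁻¹ * p ^ d * ((2:ℝ) ^ d * (F.card : ℝ)) = K * (p ^ d * (F.card : ℝ)) := by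
      rw [hKdef]; field_simp
    rw [heqK] at h2
    linarith [hTbound, hsplitH]
  have hFub : hitp V p F ≤ p ^ d * (F.card : ℝ) := by
    rw [hitp_eq_prW]
    refine le_trans (prW_mono h0 h1 (fun S hS => ?_))
      (le_trans (prW_union_le h0 h1 F (fun f S => f ⊆ S)) ?_)
    · obtain ⟨f, hf⟩ := hS
      exact ⟨f, (Finset.mem_filter.1 hf).1, (Finset.mem_filter.1 hf).2⟩
    · refine le_of_eq ?_
      calc ∑ f ∈ F, prW p (fun S => f ⊆ S) = ∑ f ∈ F, p ^ d :=
          Finset.sum_congr rfl fun f hf => by rw [prW_subset, hunif f (hFH hf)]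
        _ = p ^ d * (F.card : ℝ) := by
          rw [Finset.sum_const, nsmul_eq_mul]; exact mul_comm _ _
  have hFle2 : p ^ d * (F.card : ℝ) ≤ 2 * hitp V p F := by
    have hFP2 : (1 - εt / 2) * (p ^ d * (F.card : ℝ)) ≤ hitp V p F := by
      calc (1 - εt / 2) * (p ^ d * (F.card : ℝ))
          = (1 - εt / 2) * p ^ d * (F.card : ℝ) := by ring
        _ ≤ hitp V p F := hFP
    nlinarith [mul_nonneg (by linarith : (0:ℝ) ≤ 1/4 - εt/2) hA0]
  have hH4 : hitp V p H ≤ (1 + 2 * K) * hitp V p F := by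
    have := mul_le_mul_of_nonneg_left hFle2 (le_of_lt hK0)
    linarith
  -- the pruned family G
  obtain ⟨G, hGmem, hGmax⟩ := Finset.exists_max_image H.powerset
    (fun G => hitp V p G - (1 - εt) * p ^ d * (G.card : ℝ)) ⟨∅, Finset.empty_mem_powerset H⟩
  have hGH : G ⊆ H := Finset.mem_powerset.1 hGmem
  refine ⟨G, hGH, ?_, ?_⟩
  · -- hitting probability survives
    have hgFG : hitp V p F - (1 - εt) * p ^ d * (F.card : ℝ)
        ≤ hitp V p G - (1 - εt) * p ^ d * (G.card : ℝ) :=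
      hGmax F (Finset.mem_powerset.2 hFH)
    have hGge : hitp V p G - (1 - εt) * p ^ d * (G.card : ℝ) ≤ hitp V p G := by
      have h1e : (0:ℝ) ≤ 1 - εt := by linarith
      have := mul_nonneg (mul_nonneg h1e (le_of_lt hpd)) (Nat.cast_nonneg G.card)
      linarith
    have hgF : εt / 2 * hitp V p F ≤ hitp V p F - (1 - εt) * p ^ d * (F.card : ℝ) := by
      have hint : εt / 2 * hitp V p F ≤ εt / 2 * (p ^ d * (F.card : ℝ)) :=
        mul_le_mul_of_nonneg_left hFub (by linarith)
      nlinarith [hFP]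
    have hc'0 : (0:ℝ) < εt / (2 * (1 + 2 * K)) := by positivity
    have hstep : εt / (2 * (1 + 2 * K)) * hitp V p H
        ≤ εt / (2 * (1 + 2 * K)) * ((1 + 2 * K) * hitp V p F) :=
      mul_le_mul_of_nonneg_left hH4 (le_of_lt hc'0)
    have heq2 : εt / (2 * (1 + 2 * K)) * ((1 + 2 * K) * hitp V p F)
        = εt / 2 * hitp V p F := by
      have hpos : (1 + 2 * K) ≠ 0 := by positivity
      field_simp
    rw [heq2] at hstep
    linarith
  · -- every surviving edge is often unique
    intro e heG
    have hid := hitp_erase_add p G e heG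
    have h2 : hitp V p (G.erase e) - (1 - εt) * p ^ d * (((G.erase e).card : ℕ) : ℝ)
        ≤ hitp V p G - (1 - εt) * p ^ d * (G.card : ℝ) :=
      hGmax _ (Finset.mem_powerset.2 ((Finset.erase_subset e G).trans hGH))
    have hc : (((G.erase e).card : ℕ) : ℝ) = (G.card : ℝ) - 1 := by
      rw [Finset.card_erase_of_mem heG]
      have h1c : 1 ≤ G.card := Finset.card_pos.2 ⟨e, heG⟩
      push_cast [h1c]
      ring
    rw [hc] at h2
    have hexp : (1 - εt) * p ^ d * ((G.card : ℝ) - 1)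
        = (1 - εt) * p ^ d * (G.card : ℝ) - (1 - εt) * p ^ d := by ring
    rw [hexp] at h2
    have h3 : (1 - ε) * p ^ d ≤ (1 - εt) * p ^ d :=
      mul_le_mul_of_nonneg_right (by linarith) (le_of_lt hpd)
    linarith
end

section
/- For every positive integer d and finite alphabet Σ there exists p ∈ (0,1), and for every α ∈ (0,1) there is a constant K (depending only on d and α), such that the following holds for all positive integers n, k, t with n ≥ k ≥ t ≥ max{2d, αk} and k ≤ pn. Suppose an ensemble of local functions {f_S : binom(S,d) → Σ | S ∈ binom([n],k)} and a global function F : binom([n],d) → Σ satisfy Pr_{(S₁,S₂)∼ν_{n,k,t}}[f_{S₁}|_{S₁∩S₂} ≠ f_{S₂}|_{S₁∩S₂}] = ε and Pr_{S∼ν_{n,k}}[f_S ≠ F|_S] = δ. Then every function G : binom([n],d) → Σ defined by plurality decoding — i.e. for each T ∈ binom([n],d), G(T) is a most popular value of f_S(T) over k-element sets S ⊇ T, with ties broken arbitrarily — satisfies Pr_{S∼ν_{n,k}}[f_S ≠ G|_S] ≤ K·(ε + δ). -/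
open Finset

/-- The family of `k`-element subsets of `[n]` (modeled as `Fin n`);
`ν_{n,k}` is the uniform distribution on this family. -/
def ksets (n k : ℕ) : Finset (Finset (Fin n)) := Finset.univ.powersetCard k

/-- The support of `ν_{n,k,t}`: ordered pairs of `k`-element subsets of `[n]`
with intersection of size exactly `t` (the distribution is uniform on this set). -/
def nupairs (n k t : ℕ) : Finset (Finset (Fin n) × Finset (Fin n)) :=
  ((ksets n k) ×ˢ (ksets n k)).filter (fun P => (P.1 ∩ P.2).card = t)

/-!
Let `Δ` be the set of `k`-sets `S` with `f_S ≠ F|_S` and `M` the set of `d`-sets `T` with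
`G T ≠ F T`. As `G T` is a plurality value, at least half of the `k`-sets above each `T ∈ M`
lie in `Δ`, and `f_S ≠ G|_S` forces `S ∈ Δ` or `S ⊇ T` for some `T ∈ M`. So it suffices to
bound the union of the columns `{S ⊇ T}`, `T ∈ M`, by `O_d(|Δ|)`.

Greedily choose `M' ⊆ M` such that each new column contributes a quarter of a column of new
elements of `Δ`; then `|M'| · C(n-d,k-d) ≤ 4|Δ|`. Any other `T ∈ M` has a quarter of its column
inside the columns of `M'`; grouping these overlaps by `J = T ∩ T'` gives some `J ⊊ T` below
many members of `M'`. For `k ≤ n/2` one has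
`C(n-j,k-j) · C(n-2d+j,k-2d+j) ≤ 2^(d-j) · C(n-d,k-d)²`, so the column of such a `J` costs
`O_d(C(n-d,k-d))` per member of `M'` above it, and each member of `M'` lies above at most `2^d`
sets `J`. This gives `Pr[f_S ≠ G|_S] ≤ K δ` with `K = 4(1 + 2^(3d+2)) + 1` and `p = 1/2`.
-/

def ksetsAbove (n k : ℕ) (V : Finset (Fin n)) : Finset (Finset (Fin n)) :=
  (ksets n k).filter (V ⊆ ·)

def numAbove (n k j : ℕ) : ℕ := (n - j).choose (k - j)

lemma card_ksetsAbove {n k : ℕ} {V : Finset (Fin n)} (hV : #V ≤ k) :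
    #(ksetsAbove n k V) = numAbove n k #V := by
  simpa [ksetsAbove, ksets, numAbove] using
    card_filter_powersetCard_subset V univ k (subset_univ V) hV

lemma ksetsAbove_inter_ksetsAbove {n k : ℕ} (V W : Finset (Fin n)) :
    ksetsAbove n k V ∩ ksetsAbove n k W = ksetsAbove n k (V ∪ W) := by
  ext S
  simp only [ksetsAbove, mem_inter, mem_filter, union_subset_iff]
  tauto

lemma numAbove_pos {n k j : ℕ} (hkn : k ≤ n) : 0 < numAbove n k j :=
  Nat.choose_pos (by omega)

lemma sub_mul_numAbove_succ {n k j : ℕ} (hjk : j < k) (hkn : k ≤ n) :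
    (n - j) * numAbove n k (j + 1) = numAbove n k j * (k - j) := by
  have h := Nat.add_one_mul_choose_eq (n - (j + 1)) (k - (j + 1))
  rwa [show n - (j + 1) + 1 = n - j by omega, show k - (j + 1) + 1 = k - j by omega] at h

lemma numAbove_mul_numAbove_le {n k a b : ℕ} (hab : a ≤ b) (hbk : b < k) (hkn : 2 * k ≤ n) :
    numAbove n k a * numAbove n k (b + 1) ≤
      2 * (numAbove n k (a + 1) * numAbove n k b) := by
  have ha := sub_mul_numAbove_succ (n := n) (lt_of_le_of_lt hab hbk) (by omega)
  have hb := sub_mul_numAbove_succ (n := n) hbk (by omega)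
  have hratio : (n - a) * (k - b) ≤ 2 * ((k - a) * (n - b)) := by
    calc (n - a) * (k - b) ≤ (2 * (n - b)) * (k - a) := Nat.mul_le_mul (by omega) (by omega)
      _ = 2 * ((k - a) * (n - b)) := by ring
  refine Nat.le_of_mul_le_mul_left ?_ (Nat.mul_pos (by omega : 0 < k - a) (by omega : 0 < n - b))
  calc (k - a) * (n - b) * (numAbove n k a * numAbove n k (b + 1))
      = (numAbove n k a * (k - a)) * ((n - b) * numAbove n k (b + 1)) := by ring
    _ = ((n - a) * (k - b)) * (numAbove n k (a + 1) * numAbove n k b) := by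
        rw [← ha, hb]; ring
    _ ≤ (2 * ((k - a) * (n - b))) * (numAbove n k (a + 1) * numAbove n k b) :=
        Nat.mul_le_mul_right _ hratio
    _ = (k - a) * (n - b) * (2 * (numAbove n k (a + 1) * numAbove n k b)) := by ring

lemma numAbove_sub_mul_numAbove_add_le {n k d m : ℕ} (hmd : m ≤ d) (hdk : 2 * d ≤ k)
    (hkn : 2 * k ≤ n) :
    numAbove n k (d - m) * numAbove n k (d + m) ≤ 2 ^ m * numAbove n k d ^ 2 := by
  induction m with
  | zero => simp [sq]
  | succ m ih =>
    have hstep := numAbove_mul_numAbove_le (n := n) (a := d - (m + 1)) (b := d + m)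
      (by omega) (by omega) hkn
    rw [show d - (m + 1) + 1 = d - m by omega] at hstep
    calc numAbove n k (d - (m + 1)) * numAbove n k (d + (m + 1))
        ≤ 2 * (numAbove n k (d - m) * numAbove n k (d + m)) := hstep
      _ ≤ 2 * (2 ^ m * numAbove n k d ^ 2) := Nat.mul_le_mul_left 2 (ih (by omega))
      _ = 2 ^ (m + 1) * numAbove n k d ^ 2 := by ring

lemma exists_subset_mul_card_le_card_biUnion {ι α : Type*} [DecidableEq ι] [DecidableEq α]
    (M : Finset ι) (Y : ι → Finset α) (c : ℕ) {N : ℕ} (hN : 0 < N) :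
    ∃ M' ⊆ M, N * #M' ≤ c * #(M'.biUnion Y) ∧ ∀ T ∈ M, c * #(Y T \ M'.biUnion Y) < N := by
  set Cand := M.powerset.filter (fun M' => N * #M' ≤ c * #(M'.biUnion Y))
  obtain ⟨M', hM'C, hmax⟩ := exists_max_image Cand card ⟨∅, by simp [Cand]⟩
  rw [mem_filter, mem_powerset] at hM'C
  refine ⟨M', hM'C.1, hM'C.2, fun T hT => ?_⟩
  by_contra! hge
  have hTM' : T ∉ M' := fun hT' => by
    rw [sdiff_eq_empty_iff_subset.mpr (subset_biUnion_of_mem Y hT')] at hge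
    simp at hge
    omega
  have hins : insert T M' ∈ Cand := by
    rw [mem_filter, mem_powerset, card_insert_of_notMem hTM', biUnion_insert,
      ← card_sdiff_add_card]
    exact ⟨insert_subset hT hM'C.1, by linarith [hM'C.2]⟩
  have := hmax _ hins
  rw [card_insert_of_notMem hTM'] at this
  omega

lemma exists_subset_lt_numAbove_of_lt_card_inter {n k d : ℕ} {M' : Finset (Finset (Fin n))}
    {T : Finset (Fin n)} (hM' : ∀ T' ∈ M', #T' = d) (hT : #T = d) (hTM' : T ∉ M')
    (hdk : 2 * d ≤ k)
    (h : numAbove n k d < 4 * #(ksetsAbove n k T ∩ M'.biUnion (ksetsAbove n k))) :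
    ∃ J ⊆ T, #J < d ∧
      numAbove n k d < 2 ^ (d + 2) * (#(M'.filter (J ⊆ ·)) * numAbove n k (2 * d - #J)) := by
  set N := numAbove n k d
  set w := fun T' => numAbove n k (2 * d - #(T ∩ T'))
  have hsum : #(ksetsAbove n k T ∩ M'.biUnion (ksetsAbove n k)) ≤ ∑ T' ∈ M', w T' := by
    rw [inter_biUnion]
    refine card_biUnion_le.trans (sum_le_sum fun T' hT' => le_of_eq ?_)
    have hunion := card_union_add_card_inter T T'
    rw [hT, hM' T' hT'] at hunion
    rw [ksetsAbove_inter_ksetsAbove, card_ksetsAbove (by omega),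
      show #(T ∪ T') = 2 * d - #(T ∩ T') by omega]
  set q := N / 2 ^ (d + 2)
  have hpig : #T.powerset • q < ∑ T' ∈ M', w T' := by
    have hq : q * 2 ^ (d + 2) ≤ N := Nat.div_mul_le_self N _
    rw [card_powerset, hT, smul_eq_mul]
    rw [pow_add] at hq
    linarith
  obtain ⟨J, hJ, hlt⟩ := exists_lt_sum_fiber_of_maps_to_of_nsmul_lt_sum
    (f := fun T' => T ∩ T') (fun T' _ => mem_powerset.mpr inter_subset_left) hpig
  rw [mem_powerset] at hJ
  have hfiber : ∑ T' ∈ M' with T ∩ T' = J, w T' =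
      #(M'.filter (T ∩ · = J)) * numAbove n k (2 * d - #J) :=
    sum_const_nat fun T' hT' => by simp only [w, (mem_filter.mp hT').2]
  rw [hfiber] at hlt
  have hJT : J ≠ T := by
    rintro rfl
    have hempty : M'.filter (J ∩ · = J) = ∅ := filter_eq_empty_iff.mpr fun T' hT' hJT' =>
      hTM' (by
        rwa [eq_of_subset_of_card_le (inter_eq_left.mp hJT') (by rw [hT, hM' T' hT'])])
    rw [hempty] at hlt
    simp at hlt
  have hfib_le : #(M'.filter (T ∩ · = J)) ≤ #(M'.filter (J ⊆ ·)) :=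
    card_le_card fun T' hT' => by
      rw [mem_filter] at hT' ⊢
      exact ⟨hT'.1, hT'.2 ▸ inter_subset_right⟩
  refine ⟨J, hJ, hT ▸ card_lt_card (ssubset_of_subset_of_ne hJ hJT), ?_⟩
  calc N < 2 ^ (d + 2) * (q + 1) := Nat.lt_mul_div_succ N (by positivity)
    _ ≤ 2 ^ (d + 2) * (#(M'.filter (T ∩ · = J)) * numAbove n k (2 * d - #J)) :=
        Nat.mul_le_mul_left _ hlt
    _ ≤ 2 ^ (d + 2) * (#(M'.filter (J ⊆ ·)) * numAbove n k (2 * d - #J)) := by gcongr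

lemma numAbove_le_of_lt_mul {n k d j D : ℕ} (hjd : j ≤ d) (hdk : 2 * d ≤ k) (hkn : 2 * k ≤ n)
    (h : numAbove n k d < 2 ^ (d + 2) * (D * numAbove n k (2 * d - j))) :
    numAbove n k j ≤ 2 ^ (2 * d + 2) * numAbove n k d * D := by
  set N := numAbove n k d
  have hN : 0 < N := numAbove_pos (by omega)
  have hr := numAbove_sub_mul_numAbove_add_le (m := d - j) (by omega) hdk hkn
  rw [show d - (d - j) = j by omega, show d + (d - j) = 2 * d - j by omega] at hr
  refine Nat.le_of_mul_le_mul_left ?_ hN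
  calc N * numAbove n k j
      ≤ 2 ^ (d + 2) * (D * numAbove n k (2 * d - j)) * numAbove n k j :=
        Nat.mul_le_mul_right _ h.le
    _ = 2 ^ (d + 2) * D * (numAbove n k j * numAbove n k (2 * d - j)) := by ring
    _ ≤ 2 ^ (d + 2) * D * (2 ^ (d - j) * N ^ 2) := by gcongr
    _ ≤ 2 ^ (d + 2) * D * (2 ^ d * N ^ 2) := by gcongr <;> omega
    _ = N * (2 ^ (2 * d + 2) * N * D) := by ring

lemma sum_card_filter_subset_le {α : Type*} [DecidableEq α] {d : ℕ} (K M' : Finset (Finset α))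
    (hM' : ∀ T' ∈ M', #T' = d) :
    ∑ J ∈ K, #(M'.filter (J ⊆ ·)) ≤ 2 ^ d * #M' := by
  have hswap := sum_card_bipartiteAbove_eq_sum_card_bipartiteBelow (s := K) (t := M')
    (r := fun J T' => J ⊆ T')
  simp only [bipartiteAbove, bipartiteBelow] at hswap
  rw [hswap, mul_comm, ← smul_eq_mul]
  refine sum_le_card_nsmul _ _ _ fun T' hT' => ?_
  calc #(K.filter (· ⊆ T')) ≤ #T'.powerset :=
        card_le_card fun J hJ => mem_powerset.mpr (mem_filter.mp hJ).2
    _ = 2 ^ d := by rw [card_powerset, hM' T' hT']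

theorem card_biUnion_ksetsAbove_le {n k d : ℕ} (hdk : 2 * d ≤ k) (hkn : 2 * k ≤ n)
    (A M : Finset (Finset (Fin n))) (hM : ∀ T ∈ M, #T = d)
    (hA : ∀ T ∈ M, numAbove n k d ≤ 2 * #(A ∩ ksetsAbove n k T)) :
    #(M.biUnion (ksetsAbove n k)) ≤ 4 * (1 + 2 ^ (3 * d + 2)) * #A := by
  set N := numAbove n k d
  set col := ksetsAbove n k
  have hN : 0 < N := numAbove_pos (by omega)
  obtain ⟨M', hM'M, hpack, hterm⟩ :=
    exists_subset_mul_card_le_card_biUnion M (fun T => A ∩ col T) 4 hN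
  have hM' : ∀ T ∈ M', #T = d := fun T hT => hM T (hM'M hT)
  have hdense : ∀ T ∈ M, N < 4 * #(col T ∩ M'.biUnion col) := fun T hT => by
    have hsplit := card_inter_add_card_sdiff (A ∩ col T) (M'.biUnion fun T => A ∩ col T)
    have hsub : A ∩ col T ∩ M'.biUnion (fun T => A ∩ col T) ⊆ col T ∩ M'.biUnion col :=
      inter_subset_inter inter_subset_right (biUnion_mono fun _ _ => inter_subset_right)
    have := card_le_card hsub
    have := hA T hT
    have := hterm T hT
    omega
  set K := univ.filter fun J : Finset (Fin n) =>
    #J < d ∧ N < 2 ^ (d + 2) * (#(M'.filter (J ⊆ ·)) * numAbove n k (2 * d - #J))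
  have hcover : M.biUnion col ⊆ M'.biUnion col ∪ K.biUnion col := by
    intro S hS
    obtain ⟨T, hT, hST⟩ := mem_biUnion.mp hS
    by_cases hTM' : T ∈ M'
    · exact mem_union_left _ (mem_biUnion.mpr ⟨T, hTM', hST⟩)
    · obtain ⟨J, hJT, hJd, hJ⟩ :=
        exists_subset_lt_numAbove_of_lt_card_inter hM' (hM T hT) hTM' hdk (hdense T hT)
      have hSJ : S ∈ col J := by
        simp only [col, ksetsAbove, mem_filter] at hST ⊢
        exact ⟨hST.1, hJT.trans hST.2⟩
      exact mem_union_right _ (mem_biUnion.mpr ⟨J, mem_filter.mpr ⟨mem_univ _, hJd, hJ⟩, hSJ⟩)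
  have hcolM' : ∀ T ∈ M', #(col T) = N := fun T hT => by
    rw [card_ksetsAbove (by rw [hM' T hT]; omega), hM' T hT]
  have hcolK : ∀ J ∈ K, #(col J) ≤ 2 ^ (2 * d + 2) * N * #(M'.filter (J ⊆ ·)) := fun J hJ => by
    obtain ⟨-, hJd, hJ⟩ := mem_filter.mp hJ
    rw [card_ksetsAbove (by omega)]
    exact numAbove_le_of_lt_mul hJd.le hdk hkn hJ
  have hNM' : N * #M' ≤ 4 * #A :=
    hpack.trans (Nat.mul_le_mul_left 4
      (card_le_card (biUnion_subset.mpr fun _ _ => inter_subset_left)))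
  calc #(M.biUnion col)
      ≤ ∑ T ∈ M', #(col T) + ∑ J ∈ K, #(col J) :=
        (card_le_card hcover).trans
          ((card_union_le _ _).trans (add_le_add card_biUnion_le card_biUnion_le))
    _ ≤ #M' * N + 2 ^ (2 * d + 2) * N * (2 ^ d * #M') := by
        refine add_le_add (sum_const_nat hcolM').le ((sum_le_sum hcolK).trans ?_)
        rw [← mul_sum]
        exact Nat.mul_le_mul_left _ (sum_card_filter_subset_le K M' hM')
    _ = (1 + 2 ^ (3 * d + 2)) * (N * #M') := by ring
    _ ≤ (1 + 2 ^ (3 * d + 2)) * (4 * #A) := Nat.mul_le_mul_left _ hNM'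
    _ = 4 * (1 + 2 ^ (3 * d + 2)) * #A := by ring

section Plurality

variable {Γ : Type*} [DecidableEq Γ]

def disagreements (n k d : ℕ) (f : Finset (Fin n) → Finset (Fin n) → Γ)
    (F : Finset (Fin n) → Γ) : Finset (Finset (Fin n)) :=
  (ksets n k).filter (fun S => ¬ ∀ T ⊆ S, T.card = d → f S T = F T)

variable {n k d : ℕ} (f : Finset (Fin n) → Finset (Fin n) → Γ)

lemma disagreements_subset_union (F G : Finset (Fin n) → Γ) :
    disagreements n k d f G ⊆ disagreements n k d f F ∪
      ((univ.powersetCard d).filter (fun T => G T ≠ F T)).biUnion (ksetsAbove n k) := by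
  intro S hS
  by_cases hSF : S ∈ disagreements n k d f F
  · exact mem_union_left _ hSF
  · simp only [disagreements, mem_filter, not_forall, exists_prop] at hS
    simp only [disagreements, mem_filter, not_and, not_not] at hSF
    obtain ⟨hSk, T, hTS, hTd, hne⟩ := hS
    refine mem_union_right _ (mem_biUnion.mpr ⟨T, ?_, mem_filter.mpr ⟨hSk, hTS⟩⟩)
    rw [mem_filter, mem_powersetCard]
    exact ⟨⟨subset_univ T, hTd⟩, fun hGF => hne (by rw [hSF hSk T hTS hTd, hGF])⟩

/-- A plurality value that differs from `F T` is taken by at most half of the `k`-sets above `T`,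
so `f S` disagrees with `F` for the other half. -/
lemma numAbove_le_two_mul_card_disagreements_inter {F G : Finset (Fin n) → Γ}
    {T : Finset (Fin n)} (hT : #T = d) (hdk : d ≤ k) (hGF : G T ≠ F T)
    (hG : ∀ σ, #((ksets n k).filter (fun S => T ⊆ S ∧ f S T = σ)) ≤
      #((ksets n k).filter (fun S => T ⊆ S ∧ f S T = G T))) :
    numAbove n k d ≤ 2 * #(disagreements n k d f F ∩ ksetsAbove n k T) := by
  have hsplit := card_filter_add_card_filter_not (s := ksetsAbove n k T) (fun S => f S T = F T)
  rw [card_ksetsAbove (by omega), hT, ksetsAbove, filter_filter, filter_filter] at hsplit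
  have hGsub : (ksets n k).filter (fun S => T ⊆ S ∧ f S T = G T) ⊆
      (ksets n k).filter (fun S => T ⊆ S ∧ ¬ f S T = F T) :=
    monotone_filter_right _ fun S _ hS => ⟨hS.1, fun hF => hGF (hS.2 ▸ hF)⟩
  have hbad : (ksets n k).filter (fun S => T ⊆ S ∧ ¬ f S T = F T) ⊆
      disagreements n k d f F ∩ ksetsAbove n k T := fun S hS => by
    obtain ⟨hSk, hTS, hne⟩ := mem_filter.mp hS
    exact mem_inter.mpr ⟨mem_filter.mpr ⟨hSk, fun h => hne (h T hTS hT)⟩,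
      mem_filter.mpr ⟨hSk, hTS⟩⟩
  have := hG (F T)
  have := card_le_card hGsub
  have := card_le_card hbad
  omega

theorem card_disagreements_plurality_le (hdk : 2 * d ≤ k) (hkn : 2 * k ≤ n)
    (F G : Finset (Fin n) → Γ)
    (hG : ∀ T : Finset (Fin n), T.card = d → ∀ σ : Γ,
      #((ksets n k).filter (fun S => T ⊆ S ∧ f S T = σ)) ≤
        #((ksets n k).filter (fun S => T ⊆ S ∧ f S T = G T))) :
    #(disagreements n k d f G) ≤ (4 * (1 + 2 ^ (3 * d + 2)) + 1) * #(disagreements n k d f F) := by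
  set M := (univ.powersetCard d).filter (fun T => G T ≠ F T)
  have hM : ∀ T ∈ M, #T = d := fun T hT => (mem_powersetCard.mp (mem_filter.mp hT).1).2
  have hcore := card_biUnion_ksetsAbove_le hdk hkn (disagreements n k d f F) M hM
    fun T hT => numAbove_le_two_mul_card_disagreements_inter f (hM T hT) (by omega)
      (mem_filter.mp hT).2 (hG T (hM T hT))
  calc #(disagreements n k d f G) ≤ #(disagreements n k d f F) + #(M.biUnion (ksetsAbove n k)) :=
        (card_le_card (disagreements_subset_union f F G)).trans (card_union_le _ _)
    _ ≤ (4 * (1 + 2 ^ (3 * d + 2)) + 1) * #(disagreements n k d f F) := by linarith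

end Plurality

lemma nupairs_nonempty {n k t : ℕ} (htk : t ≤ k) (hn : 2 * k - t ≤ n) :
    (nupairs n k t).Nonempty := by
  have hlt : ∀ s : Finset ℕ, s ⊆ range (2 * k - t) → ∀ m ∈ s, m < n := fun s hs m hm => by
    have := mem_range.mp (hs hm)
    omega
  let S₁ := (range k).attachFin (hlt _ (range_subset_range.mpr (by omega)))
  let S₂ := (Ico (k - t) (2 * k - t)).attachFin (hlt _ fun m hm => by simp at hm ⊢; omega)
  have hinter : S₁ ∩ S₂ = (Ico (k - t) k).attachFin (hlt _ fun m hm => by simp at hm ⊢; omega) := by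
    ext i
    simp only [S₁, S₂, mem_inter, mem_attachFin, mem_range, mem_Ico]
    omega
  refine ⟨(S₁, S₂), ?_⟩
  simp only [nupairs, ksets, mem_filter, mem_product, mem_powersetCard, subset_univ, true_and,
    hinter, S₁, S₂, card_attachFin, card_range, Nat.card_Ico]
  omega

/-- Local functions `f_S : binom(S,d) → Σ` are modeled as total functions on `Finset (Fin n)`,
evaluated only at `d`-element subsets. -/
theorem stmt19 :
    ∀ (d : ℕ), 0 < d →
      ∃ K : ℝ → ℝ,
        ∀ (Γ : Type) [Fintype Γ] [DecidableEq Γ],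
          ∃ p : ℝ, p ∈ Set.Ioo (0:ℝ) 1 ∧
            ∀ α : ℝ, α ∈ Set.Ioo (0:ℝ) 1 →
              ∀ (n k t : ℕ), t ≤ k → k ≤ n → 2 * d ≤ t →
                α * (k : ℝ) ≤ (t : ℝ) → (k : ℝ) ≤ p * (n : ℝ) →
                ∀ (f : Finset (Fin n) → Finset (Fin n) → Γ)
                  (F : Finset (Fin n) → Γ) (ε δ : ℝ),
                  (((nupairs n k t).filter
                      (fun P => ¬ ∀ T ⊆ P.1 ∩ P.2, T.card = d →
                        f P.1 T = f P.2 T)).card : ℝ) =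
                    ε * ((nupairs n k t).card : ℝ) →
                  (((ksets n k).filter
                      (fun S => ¬ ∀ T ⊆ S, T.card = d → f S T = F T)).card : ℝ) =
                    δ * ((ksets n k).card : ℝ) →
                  ∀ G : Finset (Fin n) → Γ,
                    (∀ T : Finset (Fin n), T.card = d → ∀ σ : Γ,
                      ((ksets n k).filter (fun S => T ⊆ S ∧ f S T = σ)).card ≤
                        ((ksets n k).filter (fun S => T ⊆ S ∧ f S T = G T)).card) →
                    (((ksets n k).filter
                        (fun S => ¬ ∀ T ⊆ S, T.card = d → f S T = G T)).card : ℝ) ≤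
                      K α * (ε + δ) * ((ksets n k).card : ℝ) := by
  intro d _
  refine ⟨fun _ => ((4 * (1 + 2 ^ (3 * d + 2)) + 1 : ℕ) : ℝ), fun Γ _ _ => ?_⟩
  refine ⟨1 / 2, ⟨by norm_num, by norm_num⟩, ?_⟩
  intro α _ n k t htk _ h2dt _ hkpn f F ε δ hε hδ G hG
  have h2kn : 2 * k ≤ n := by exact_mod_cast (by linarith : (2 * k : ℝ) ≤ n)
  have hε0 : 0 ≤ ε := by
    have hpairs : (0 : ℝ) < #(nupairs n k t) :=
      Nat.cast_pos.mpr (nupairs_nonempty htk (by omega)).card_pos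
    nlinarith [hε ▸ (Nat.cast_nonneg _ : (0 : ℝ) ≤ _)]
  have hbound : (#(disagreements n k d f G) : ℝ) ≤
      ((4 * (1 + 2 ^ (3 * d + 2)) + 1 : ℕ) : ℝ) * #(disagreements n k d f F) := by
    exact_mod_cast card_disagreements_plurality_le f (h2dt.trans htk) h2kn F G hG
  rw [disagreements, disagreements, hδ] at hbound
  refine hbound.trans ?_
  rw [mul_assoc]
  gcongr
  nlinarith [(Nat.cast_nonneg _ : (0 : ℝ) ≤ #(ksets n k))]
end
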